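/- arXiv:1211.3478 — 3 statements merged into one kernel-verified Lean document; each statement's English description precedes it below -/
import Mathlib

section
/- Let (g, h) be a Lie pair, E an h-module, and ∇ a g-connection on E extending the h-action. Then for every a ∈ h the operator R^∇(a, x) ∈ End(E) depends only on the class x̄ = x mod h of x ∈ g, and the resulting linear map R̄^∇ : h → Hom(g/h, End(E)), R̄^∇(a)(x̄) = R^∇(a, x), is a Chevalley–Eilenberg 1-cocycle: R̄^∇([a,b]) = a · R̄^∇(b) − b · R̄^∇(a) for all a, b ∈ h. -/
/-!
The curvature of any linear map `D : g → A` into an associative algebra satisfies the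
Bianchi-type identity
`R⁅x, y⁆ z + ⁅R x y, D z⁆ = ⁅D x, R y z⁆ - R y ⁅x, z⁆ - (⁅D y, R x z⁆ - R x ⁅y, z⁆)`.
If `D` extends a Lie algebra map `ρ : h → A`, then `R` vanishes on `h × h`; hence `R a x` for
`a ∈ h` only depends on `x` modulo `h`, and for `a, b ∈ h` the term `⁅R a b, D x⁆` drops out of
the identity, which is then exactly the cocycle condition for `R̄`.
-/

noncomputable section
open scoped TensorProduct
open UniversalEnvelopingAlgebra

variable (K : Type*) [Field K] [CharZero K]

attribute [local instance 100] LieRing.ofAssociativeRing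

section Curvature

variable {R L A : Type*} [CommRing R] [LieRing L] [LieAlgebra R L] [Ring A] [Algebra R A]

def curvature (D : L →ₗ[R] A) : L →ₗ[R] L →ₗ[R] A :=
  (LinearMap.mul R A).compl₁₂ D D - (LinearMap.mul R A).flip.compl₁₂ D D
    - (LieAlgebra.ad R L : L →ₗ[R] Module.End R L).compr₂ D

theorem curvature_apply (D : L →ₗ[R] A) (x y : L) :
    curvature D x y = D x * D y - D y * D x - D ⁅x, y⁆ := rfl

theorem curvature_lie_left (D : L →ₗ[R] A) (x y z : L) :
    curvature D ⁅x, y⁆ z + ⁅curvature D x y, D z⁆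
      = ⁅D x, curvature D y z⁆ - curvature D y ⁅x, z⁆
        - (⁅D y, curvature D x z⁆ - curvature D x ⁅y, z⁆) := by
  simp only [curvature_apply, Ring.lie_def, lie_lie, map_sub]
  noncomm_ring

variable {h : LieSubalgebra R L} {ρ : h →ₗ⁅R⁆ A} {D : L →ₗ[R] A}

theorem curvature_eq_zero_of_extends (hext : ∀ a : h, D a = ρ a) (a c : h) :
    curvature D a c = 0 := by
  rw [curvature_apply, hext a, hext c, ← LieSubalgebra.coe_bracket, hext, LieHom.map_lie,
    Ring.lie_def, sub_self]

theorem curvature_eq_of_sub_mem (hext : ∀ a : h, D a = ρ a) (a : h) {x y : L} (hxy : x - y ∈ h) :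
    curvature D a x = curvature D a y := by
  rw [← sub_eq_zero, ← map_sub]
  exact curvature_eq_zero_of_extends hext a ⟨x - y, hxy⟩

variable (h ρ D) in
def atiyahCocycle (hext : ∀ a : h, D a = ρ a) : h →ₗ[R] (L ⧸ h.toSubmodule) →ₗ[R] A :=
  (h.toSubmodule.liftQ ((curvature D).comp (h.incl : h →ₗ[R] L)).flip fun c hc ↦
    LinearMap.ext fun a ↦ curvature_eq_zero_of_extends hext a ⟨c, hc⟩).flip

theorem atiyahCocycle_mk (hext : ∀ a : h, D a = ρ a) (a : h) (x : L) :
    atiyahCocycle h ρ D hext a (Submodule.Quotient.mk x) = curvature D a x := rfl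

theorem atiyahCocycle_lie (hext : ∀ a : h, D a = ρ a) (a b : h) (x : L) :
    atiyahCocycle h ρ D hext ⁅a, b⁆ (Submodule.Quotient.mk x)
      = ⁅ρ a, atiyahCocycle h ρ D hext b (Submodule.Quotient.mk x)⁆
          - atiyahCocycle h ρ D hext b (Submodule.Quotient.mk ⁅(a : L), x⁆)
        - (⁅ρ b, atiyahCocycle h ρ D hext a (Submodule.Quotient.mk x)⁆
          - atiyahCocycle h ρ D hext a (Submodule.Quotient.mk ⁅(b : L), x⁆)) := by
  have bianchi := curvature_lie_left D a b x
  rw [← LieSubalgebra.coe_bracket, curvature_eq_zero_of_extends hext, zero_lie, add_zero,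
    hext a, hext b] at bianchi
  simpa only [atiyahCocycle_mk] using bianchi

end Curvature

/-- Let `(g, h)` be a Lie pair, `E` an `h`-module (with action `ρ`), and `D` a
`g`-connection on `E` extending the `h`-action. Then for every `a ∈ h` the curvature operator
`R^D(a, x) ∈ End(E)` depends only on the class of `x` modulo `h`, and the resulting linear map
`R̄^D : h → Hom(g/h, End E)` is a Chevalley–Eilenberg 1-cocycle. -/
theorem atiyah_cocycle_of_lie_pair
    (g : Type*) [LieRing g] [LieAlgebra K g] (h : LieSubalgebra K g)
    (E : Type*) [AddCommGroup E] [Module K E]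
    (ρ : h →ₗ⁅K⁆ Module.End K E)
    (D : g →ₗ[K] Module.End K E)
    (hext : ∀ a : h, D (a : g) = ρ a)
    (R : g → g → Module.End K E)
    (hR : ∀ x y : g, R x y = D x * D y - D y * D x - D ⁅x, y⁆) :
    (∀ (a : h) (x y : g), x - y ∈ h → R (a : g) x = R (a : g) y) ∧
    ∃ Rbar : h →ₗ[K] (g ⧸ h.toSubmodule) →ₗ[K] Module.End K E,
      (∀ (a : h) (x : g), Rbar a (Submodule.Quotient.mk x) = R (a : g) x) ∧
      (∀ (a b : h) (x : g),
        Rbar ⁅a, b⁆ (Submodule.Quotient.mk x)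
          = (ρ a * Rbar b (Submodule.Quotient.mk x)
              - Rbar b (Submodule.Quotient.mk x) * ρ a
              - Rbar b (Submodule.Quotient.mk ⁅(a : g), x⁆))
            - (ρ b * Rbar a (Submodule.Quotient.mk x)
              - Rbar a (Submodule.Quotient.mk x) * ρ b
              - Rbar a (Submodule.Quotient.mk ⁅(b : g), x⁆))) := by
  obtain rfl : R = fun x y ↦ curvature D x y := funext₂ hR
  refine ⟨fun a x y ↦ curvature_eq_of_sub_mem hext a, atiyahCocycle h ρ D hext,
    atiyahCocycle_mk hext, fun a b x ↦ ?_⟩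
  simpa only [Ring.lie_def] using atiyahCocycle_lie hext a b x
end
end

section
/- Let (g, h) be a Lie pair, E an h-module, and let ∇ and ∇′ be two g-connections on E extending the h-action. Then the map φ : g/h → End(E) given by φ(x mod h) = ∇_x − ∇′_x is well defined, and the difference of the two Atiyah cocycles is the Chevalley–Eilenberg 1-coboundary of φ: R̄^∇(a) − R̄^{∇′}(a) = a · φ for all a ∈ h. Consequently the cohomology class of the Atiyah cocycle R̄^∇ is independent of the choice of connection ∇ extending the h-action. -/
/-!
Both connections restrict to `ρ` on `h`, so `D - D'` kills `h` and descends to `g ⧸ h`; in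
`R a x - R' a x` with `a ∈ h` the common value `D a = D' a = ρ a` factors out of the
commutator terms, leaving exactly the coboundary of that difference.
-/

noncomputable section
open scoped TensorProduct
open UniversalEnvelopingAlgebra
attribute [local instance 100] LieRing.ofAssociativeRing

variable (K : Type*) [Field K] [CharZero K]

section Connection

variable {k g E : Type*} [CommRing k] [LieRing g] [LieAlgebra k g] [AddCommGroup E] [Module k E]

def connectionCurvature (D : g →ₗ[k] Module.End k E) (x y : g) : Module.End k E :=
  D x * D y - D y * D x - D ⁅x, y⁆

theorem connectionCurvature_sub_connectionCurvature (D D' : g →ₗ[k] Module.End k E) {a : g}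
    {A : Module.End k E} (ha : D a = A) (ha' : D' a = A) (x : g) :
    connectionCurvature D a x - connectionCurvature D' a x
      = A * (D x - D' x) - (D x - D' x) * A - (D ⁅a, x⁆ - D' ⁅a, x⁆) := by
  subst ha
  rw [connectionCurvature, connectionCurvature, ha']
  noncomm_ring

theorem toSubmodule_le_ker_sub {h : LieSubalgebra k g} {D D' : g →ₗ[k] Module.End k E}
    (hDD' : ∀ a : h, D a = D' a) : h.toSubmodule ≤ LinearMap.ker (D - D') :=
  fun x hx => sub_eq_zero.mpr (hDD' ⟨x, hx⟩)

def connectionDiff (h : LieSubalgebra k g) (D D' : g →ₗ[k] Module.End k E)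
    (hDD' : ∀ a : h, D a = D' a) : (g ⧸ h.toSubmodule) →ₗ[k] Module.End k E :=
  h.toSubmodule.liftQ (D - D') (toSubmodule_le_ker_sub hDD')

@[simp]
theorem connectionDiff_mk (h : LieSubalgebra k g) (D D' : g →ₗ[k] Module.End k E)
    (hDD' : ∀ a : h, D a = D' a) (x : g) :
    connectionDiff h D D' hDD' (Submodule.Quotient.mk x) = D x - D' x :=
  rfl

end Connection

/-- Let `(g, h)` be a Lie pair, `E` an `h`-module, and `D`, `D'` two
`g`-connections on `E` extending the `h`-action. Then `φ(x mod h) = Dₓ − D'ₓ` is a well-defined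
linear map `g/h → End(E)` and the difference of the two Atiyah cocycles is the
Chevalley–Eilenberg coboundary of `φ`; consequently the cohomology class of the Atiyah cocycle
is independent of the choice of connection. -/
theorem atiyah_class_independent_of_connection
    (g : Type*) [LieRing g] [LieAlgebra K g] (h : LieSubalgebra K g)
    (E : Type*) [AddCommGroup E] [Module K E]
    (ρ : h →ₗ⁅K⁆ Module.End K E)
    (D D' : g →ₗ[K] Module.End K E)
    (hext : ∀ a : h, D (a : g) = ρ a) (hext' : ∀ a : h, D' (a : g) = ρ a)
    (R R' : g → g → Module.End K E)
    (hR : ∀ x y : g, R x y = D x * D y - D y * D x - D ⁅x, y⁆)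
    (hR' : ∀ x y : g, R' x y = D' x * D' y - D' y * D' x - D' ⁅x, y⁆) :
    ∃ φ : (g ⧸ h.toSubmodule) →ₗ[K] Module.End K E,
      (∀ x : g, φ (Submodule.Quotient.mk x) = D x - D' x) ∧
      (∀ (a : h) (x : g),
        R (a : g) x - R' (a : g) x
          = ρ a * φ (Submodule.Quotient.mk x)
            - φ (Submodule.Quotient.mk x) * ρ a
            - φ (Submodule.Quotient.mk ⁅(a : g), x⁆)) := by
  obtain rfl : R = connectionCurvature D := funext₂ hR
  obtain rfl : R' = connectionCurvature D' := funext₂ hR'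
  refine ⟨connectionDiff h D D' fun a => (hext a).trans (hext' a).symm,
    connectionDiff_mk h D D' _, fun a x => ?_⟩
  simp only [connectionDiff_mk]
  exact connectionCurvature_sub_connectionCurvature D D' (hext a) (hext' a) x
end
end

section
/- Let h be a Lie algebra and E a vector space over a field of characteristic zero, and let a ↦ δ(a) be a Lie algebra homomorphism from h into the Lie algebra of coderivations δ of the deconcatenation coalgebra S(E) satisfying δ(1) = 0. Then the first components μ₁(a) := pr_E ∘ δ(a)|_{E} define an h-module structure on E, i.e., μ₁ : h → gl(E) is a Lie algebra homomorphism. -/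
/-!
A coderivation `δ` with `δ 1 = 0` maps primitive elements of `S(E)` to primitive elements, and
`E = S¹(E)` consists of primitives. Conversely, in characteristic zero every primitive element
lies in `S¹(E)`: the algebra map `m ∘ Δ` multiplies a monomial of degree `n` by `2ⁿ`, but
multiplies a primitive element by `2`. Hence each `δ(a)` preserves `E`, and on operators
preserving `E` the compression `f ↦ pr_E ∘ f ∘ ι` is multiplicative, so it respects commutators.
-/

noncomputable section
open scoped TensorProduct
open UniversalEnvelopingAlgebra

attribute [local instance 100] LieRing.ofAssociativeRing

variable (K : Type*) [Field K] [CharZero K]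

section Sym
variable (E : Type*) [AddCommGroup E] [Module K E]

/-- Model of the symmetric algebra `S(E)`: polynomials on a basis of `E`. -/
abbrev SymA := MvPolynomial (Module.Basis.ofVectorSpaceIndex K E) K

/-- The canonical inclusion `E → S(E)` (onto `S¹(E)`). -/
def symι : E →ₗ[K] SymA K E :=
  (Finsupp.linearCombination K (fun i => MvPolynomial.X i)).comp
    ((Module.Basis.ofVectorSpace K E).repr : E ≃ₗ[K] _).toLinearMap

/-- Universal property of `S(E)`: the lift of a linear map into a commutative algebra,
i.e. the unique algebra morphism `S(E) → A` extending it. -/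
def symLift {A : Type*} [CommRing A] [Algebra K A] (f : E →ₗ[K] A) : SymA K E →ₐ[K] A :=
  MvPolynomial.aeval fun i => f (Module.Basis.ofVectorSpace K E i)

/-- The deconcatenation comultiplication on `S(E)`, i.e. the unique algebra morphism
`S(E) → S(E) ⊗ S(E)` sending each `e ∈ E` to `e ⊗ 1 + 1 ⊗ e`. -/
def symComul : SymA K E →ₐ[K] (SymA K E ⊗[K] SymA K E) :=
  symLift K E ((((TensorProduct.mk K (SymA K E) (SymA K E)).flip 1)
    + (TensorProduct.mk K (SymA K E) (SymA K E) 1)).comp (symι K E))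

/-- The counit of `S(E)`: the unique algebra morphism `S(E) → K` killing `E`. -/
def symCounit : SymA K E →ₐ[K] K := symLift K E 0

/-- The projection `S(E) → E` onto the degree-one component `S¹(E) = E`. -/
def symPr : SymA K E →ₗ[K] E :=
  (Finsupp.lsum K fun xs : (Module.Basis.ofVectorSpaceIndex K E) →₀ ℕ =>
    (LinearMap.ringLmapEquivSelf K K E).symm <|
      letI := Classical.propDecidable (∃ i, xs = Finsupp.single i 1)
      if h : ∃ i, xs = Finsupp.single i 1 then (Module.Basis.ofVectorSpace K E) h.choose else 0).comp
      (AddMonoidAlgebra.coeffLinearEquiv K).toLinearMap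

/-- The unique derivation of `S(E)` extending the linear map `f : E → E`. -/
def symDer (f : E →ₗ[K] E) : SymA K E →ₗ[K] SymA K E :=
  (MvPolynomial.mkDerivation K fun i => symι K E (f (Module.Basis.ofVectorSpace K E i)) :
    Derivation K (SymA K E) (SymA K E)).toLinearMap

/-- The filtration `S^{≤n}(E)`: the span of products of at most `n` elements of `E`. -/
def symFil (n : ℕ) : Submodule K (SymA K E) :=
  Submodule.span K {x | ∃ (m : ℕ) (v : Fin m → E), m ≤ n ∧ x = ∏ i, symι K E (v i)}

/-- `S^{≥1}(E) = ⊕_{m≥1} Sᵐ(E)`: the span of products of at least one element of `E`. -/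
def symFilGe1 : Submodule K (SymA K E) :=
  Submodule.span K {x | ∃ (m : ℕ) (v : Fin m → E), 1 ≤ m ∧ x = ∏ i, symι K E (v i)}

/-- A coderivation of the (deconcatenation) coalgebra `S(E)`:
`Δ ∘ δ = (δ ⊗ id + id ⊗ δ) ∘ Δ`. -/
def IsCoderivation (δ : SymA K E →ₗ[K] SymA K E) : Prop :=
  ∀ s, symComul K E (δ s)
    = TensorProduct.map δ LinearMap.id (symComul K E s)
      + TensorProduct.map LinearMap.id δ (symComul K E s)

end Sym

open MvPolynomial

theorem MvPolynomial.aeval_smul_X_monomial {σ R : Type*} [CommSemiring R] (c : R)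
    (m : σ →₀ ℕ) (a : R) :
    aeval (fun i => c • X i) (monomial m a : MvPolynomial σ R) = c ^ m.degree • monomial m a := by
  simp_rw [aeval_monomial, smul_pow, Algebra.smul_def, Finsupp.prod, Finset.prod_mul_distrib,
    ← map_prod, Finset.prod_pow_eq_pow_sum, ← Finsupp.degree_apply, monomial_eq, Finsupp.prod,
    algebraMap_eq]
  ring

theorem MvPolynomial.coeff_aeval_smul_X {σ R : Type*} [CommSemiring R] (c : R)
    (m : σ →₀ ℕ) (p : MvPolynomial σ R) :
    coeff m (aeval (fun i => c • X i) p) = c ^ m.degree * coeff m p := by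
  classical
  conv_lhs => rw [p.as_sum]
  simp only [map_sum, coeff_sum, aeval_smul_X_monomial, coeff_smul, coeff_monomial, smul_eq_mul,
    mul_ite, mul_zero, Finset.sum_ite_eq']
  split_ifs with hm
  · rfl
  · rw [notMem_support_iff.mp hm, mul_zero]

theorem LinearMap.comp_mul_comp_of_mem_range {R M N : Type*} [CommRing R] [AddCommGroup M]
    [Module R M] [AddCommGroup N] [Module R N] {i : N →ₗ[R] M} {p : M →ₗ[R] N}
    (hpi : p ∘ₗ i = LinearMap.id) (f : Module.End R M) {g : Module.End R M}
    (hg : ∀ n, g (i n) ∈ LinearMap.range i) :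
    p ∘ₗ (f * g) ∘ₗ i = (p ∘ₗ f ∘ₗ i) * (p ∘ₗ g ∘ₗ i) := by
  ext n
  obtain ⟨n', hn'⟩ := hg n
  simp [← hn', ← LinearMap.comp_apply p i, hpi]

theorem LinearMap.comp_lie_comp_of_mem_range {R M N : Type*} [CommRing R] [AddCommGroup M]
    [Module R M] [AddCommGroup N] [Module R N] {i : N →ₗ[R] M} {p : M →ₗ[R] N}
    (hpi : p ∘ₗ i = LinearMap.id) {f g : Module.End R M}
    (hf : ∀ n, f (i n) ∈ LinearMap.range i) (hg : ∀ n, g (i n) ∈ LinearMap.range i) :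
    p ∘ₗ ⁅f, g⁆ ∘ₗ i = ⁅p ∘ₗ f ∘ₗ i, p ∘ₗ g ∘ₗ i⁆ := by
  rw [Ring.lie_def, Ring.lie_def, LinearMap.sub_comp, LinearMap.comp_sub,
    comp_mul_comp_of_mem_range hpi f hg, comp_mul_comp_of_mem_range hpi g hf]

section Primitive

variable {K} {E : Type*} [AddCommGroup E] [Module K E]

def IsPrimitive (y : SymA K E) : Prop :=
  symComul K E y = y ⊗ₜ[K] 1 + 1 ⊗ₜ[K] y

omit [CharZero K] in
@[simp]
theorem symι_coe_ofVectorSpaceIndex (i : Module.Basis.ofVectorSpaceIndex K E) :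
    symι K E i = X i := by
  rw [← Module.Basis.ofVectorSpace_apply_self, symι, LinearMap.comp_apply, LinearEquiv.coe_coe,
    Module.Basis.repr_self, Finsupp.linearCombination_single, one_smul]

omit [CharZero K] in
theorem symPr_monomial_single (i : Module.Basis.ofVectorSpaceIndex K E) (c : K) :
    symPr K E (monomial (Finsupp.single i 1) c) = c • (i : E) := by
  have hex : ∃ j, Finsupp.single i 1 = Finsupp.single j 1 := ⟨i, rfl⟩
  have hchoose : hex.choose = i := (Finsupp.single_left_injective one_ne_zero hex.choose_spec).symm
  rw [symPr, LinearMap.comp_apply, ← single_eq_monomial, LinearEquiv.coe_coe,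
    AddMonoidAlgebra.coeffLinearEquiv_apply, AddMonoidAlgebra.coeff_single, Finsupp.lsum_single,
    dif_pos hex, hchoose]
  simp [Module.Basis.ofVectorSpace_apply_self]

omit [CharZero K] in
theorem symPr_comp_symι : symPr K E ∘ₗ symι K E = LinearMap.id := by
  refine (Module.Basis.ofVectorSpace K E).ext fun i => ?_
  simpa [X] using symPr_monomial_single i (1 : K)

omit [CharZero K] in
theorem isPrimitive_symι (e : E) : IsPrimitive (symι K E e) := by
  have hcomul : (symComul K E).toLinearMap ∘ₗ symι K E
      = ((TensorProduct.mk K (SymA K E) (SymA K E)).flip 1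
        + TensorProduct.mk K (SymA K E) (SymA K E) 1) ∘ₗ symι K E := by
    refine (Module.Basis.ofVectorSpace K E).ext fun i => ?_
    simp [symComul, symLift, Module.Basis.ofVectorSpace_apply_self]
  simpa [IsPrimitive] using LinearMap.congr_fun hcomul e

omit [CharZero K] in
theorem IsCoderivation.isPrimitive_apply {δ : SymA K E →ₗ[K] SymA K E}
    (hδ : IsCoderivation K E δ) (hδ1 : δ 1 = 0) {y : SymA K E} (hy : IsPrimitive y) :
    IsPrimitive (δ y) := by
  rw [IsPrimitive, hδ, hy]
  simp [hδ1]

omit [CharZero K] in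
theorem lmul'_comp_symComul :
    (Algebra.TensorProduct.lmul' K).comp (symComul K E) = aeval fun i => (2 : K) • X i := by
  refine algHom_ext fun i => ?_
  simp [symComul, symLift, Module.Basis.ofVectorSpace_apply_self, two_smul]

theorem IsPrimitive.degree_eq_one {y : SymA K E} (hy : IsPrimitive y) {m} (hm : m ∈ y.support) :
    m.degree = 1 := by
  have hscale : (2 : K) ^ m.degree * coeff m y = 2 * coeff m y := by
    rw [← coeff_aeval_smul_X, ← lmul'_comp_symComul, AlgHom.comp_apply, hy]
    simp [two_mul]
  have hpow : ((2 ^ m.degree : ℕ) : K) = ((2 ^ 1 : ℕ) : K) := by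
    exact_mod_cast mul_right_cancel₀ (mem_support_iff.mp hm) hscale
  exact Nat.pow_right_injective le_rfl (Nat.cast_injective hpow)

theorem IsPrimitive.mem_range_symι {y : SymA K E} (hy : IsPrimitive y) :
    y ∈ LinearMap.range (symι K E) := by
  rw [y.as_sum]
  refine Submodule.sum_mem _ fun m hm => ?_
  obtain ⟨i, rfl⟩ := (Finsupp.sum_eq_one_iff m).mp (hy.degree_eq_one hm)
  exact ⟨coeff (Finsupp.single i 1) y • (i : E), by simp [X, smul_monomial]⟩

end Primitive

/-- Let `δ : h → coderivations of S(E) with δ(a)(1) = 0` be a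
Lie algebra homomorphism. Then the first components `μ₁(a) = pr_E ∘ δ(a)|_E` define an
`h`-module structure on `E`, i.e. `μ₁ : h → gl(E)` is a Lie algebra homomorphism. -/
theorem first_component_is_module_structure
    (h : Type*) [LieRing h] [LieAlgebra K h]
    (E : Type*) [AddCommGroup E] [Module K E]
    (δ : h →ₗ⁅K⁆ Module.End K (SymA K E))
    (hcoder : ∀ a : h, IsCoderivation K E (δ a))
    (hone : ∀ a : h, δ a 1 = 0) :
    ∃ μ₁ : h →ₗ⁅K⁆ Module.End K E,
      ∀ (a : h) (e : E), μ₁ a e = symPr K E (δ a (symι K E e)) := by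
  have hrange (a : h) (e : E) : δ a (symι K E e) ∈ LinearMap.range (symι K E) :=
    ((hcoder a).isPrimitive_apply (hone a) (isPrimitive_symι e)).mem_range_symι
  let firstComponent : Module.End K (SymA K E) →ₗ[K] Module.End K E :=
    LinearMap.llcomp K E (SymA K E) E (symPr K E) ∘ₗ LinearMap.lcomp K (SymA K E) (symι K E)
  refine ⟨{ toLinearMap := firstComponent ∘ₗ δ.toLinearMap, map_lie' := ?_ }, fun a e => rfl⟩
  intro a b
  simpa [firstComponent, LinearMap.llcomp_apply', LinearMap.lcomp_apply'] using
    LinearMap.comp_lie_comp_of_mem_range (symPr_comp_symι (K := K)) (hrange a) (hrange b)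
end
end
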